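/- arXiv:1108.1019 — 2 statements merged into one kernel-verified Lean document; each statement's English description precedes it below -/
import Mathlib

section
/- Let (u₀,v₀) be a standard pair and let F₁, F₂ be cdf's satisfying condition (a). Then the following are equivalent: (i) ∫_{-∞}^{c} v₀(F₁(x)) du₀(x) ≥ ∫_{-∞}^{c} v₀(F₂(x)) du₀(x) for all c ∈ ℝ; (ii) ∫_{0}^{p} u₀(F₁⁻¹(α)) dv₀(α) ≤ ∫_{0}^{p} u₀(F₂⁻¹(α)) dv₀(α) for all p ∈ [0,1). -/
open MeasureTheory Set Filter Topology Function

noncomputable section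

/-- A cumulative distribution function: non-decreasing, right-continuous,
with limit 0 at -∞ and limit 1 at +∞. -/
structure IsCDF (F : ℝ → ℝ) : Prop where
  mono : Monotone F
  right_cont : ∀ x, ContinuousWithinAt F (Ici x) x
  tendsto_atBot : Tendsto F atBot (𝓝 0)
  tendsto_atTop : Tendsto F atTop (𝓝 1)

/-- The quantile function `F⁻¹ (α) = inf {x | F x ≥ α}`. -/
def qf (F : ℝ → ℝ) (α : ℝ) : ℝ := sInf {x | α ≤ F x}

/-- `(u₀, v₀)` is a standard pair: `u₀ : ℝ → ℝ` non-decreasing left-continuous,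
`v₀ : [0,1] → [0,1]` non-decreasing right-continuous with `v₀ 0 = 0` and `v₀ (1⁻) = 1`. -/
structure StandardPair (u₀ v₀ : ℝ → ℝ) : Prop where
  u_mono : Monotone u₀
  u_left_cont : ∀ x, ContinuousWithinAt u₀ (Iic x) x
  v_mono : MonotoneOn v₀ (Icc 0 1)
  v_right_cont : ∀ α ∈ Ico (0:ℝ) 1, Tendsto v₀ (𝓝[>] α) (𝓝 (v₀ α))
  v_mem : ∀ α ∈ Icc (0:ℝ) 1, v₀ α ∈ Icc (0:ℝ) 1
  v_zero : v₀ 0 = 0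
  v_one : Tendsto v₀ (𝓝[<] (1:ℝ)) (𝓝 1)

/-- `μ` is the Lebesgue–Stieltjes measure of the left-continuous integrator `g` on `ℝ`:
`μ [a,b) = g b - g a`. -/
def IsLSL (g : ℝ → ℝ) (μ : Measure ℝ) : Prop :=
  ∀ a b : ℝ, a ≤ b → μ (Ico a b) = ENNReal.ofReal (g b - g a)

/-- `μ` is the Lebesgue–Stieltjes measure of the right-continuous integrator `g` on `ℝ`:
`μ (a,b] = g b - g a`. -/
def IsLSR (g : ℝ → ℝ) (μ : Measure ℝ) : Prop :=
  ∀ a b : ℝ, a ≤ b → μ (Ioc a b) = ENNReal.ofReal (g b - g a)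

/-- `μ` behaves on `[0,1]` as the Lebesgue–Stieltjes measure of the right-continuous
integrator `g`: `μ (a,b] = g b - g a` for `0 ≤ a ≤ b ≤ 1`. -/
def IsLSR01 (g : ℝ → ℝ) (μ : Measure ℝ) : Prop :=
  ∀ a b : ℝ, 0 ≤ a → a ≤ b → b ≤ 1 → μ (Ioc a b) = ENNReal.ofReal (g b - g a)

/-- `μ` behaves inside `(0,1)` as the Lebesgue–Stieltjes measure of the left-continuous
integrator `g`: `μ [a,b) = g b - g a` for `0 < a ≤ b < 1`. -/
def IsLSL01 (g : ℝ → ℝ) (μ : Measure ℝ) : Prop :=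
  ∀ a b : ℝ, 0 < a → a ≤ b → b < 1 → μ (Ico a b) = ENNReal.ofReal (g b - g a)

/-- `u` has density `k` with respect to the Stieltjes measure `μ₀` of `u₀`
(left-continuous convention `[a,b)`), i.e. `du = k du₀`:
`u b - u a = ∫_{[a,b)} k dμ₀` for all `a ≤ b`. -/
def HasDensity (u k : ℝ → ℝ) (μ₀ : Measure ℝ) : Prop :=
  ∀ a b : ℝ, a ≤ b → u b - u a = ∫ s in Ico a b, k s ∂μ₀

/-- The upper `(u₀,v₀)`-ordering `F₁ ≺^{(u₀,v₀)} F₂`: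
`∫ v₀(F₁) du ≥ ∫ v₀(F₂) du` for every non-decreasing `u₀`-concave `u`, where such a `u`
is encoded through its Radon–Nikodym density `k = du/du₀` (bounded, non-negative,
non-increasing), so that `du = k dμ₀`.  Here `μ₀` is the Stieltjes measure of `u₀`. -/
def UpperOrder (v₀ F₁ F₂ : ℝ → ℝ) (μ₀ : Measure ℝ) : Prop :=
  ∀ k : ℝ → ℝ, Antitone k → (∀ x, 0 ≤ k x) → (∃ C, ∀ x, k x ≤ C) →
    ∫⁻ x, ENNReal.ofReal (v₀ (F₂ x)) ∂(μ₀.withDensity fun x => ENNReal.ofReal (k x)) ≤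
      ∫⁻ x, ENNReal.ofReal (v₀ (F₁ x)) ∂(μ₀.withDensity fun x => ENNReal.ofReal (k x))

/-- The lower `(u₀,v₀)`-ordering `F₁ ≺_{(u₀,v₀)} F₂`:
`-∫ (1 - v₀(F₁)) du ≥ -∫ (1 - v₀(F₂)) du` for every non-decreasing `u₀`-convex `u`,
encoded through its density `m = du/du₀` (non-negative, non-decreasing). -/
def LowerOrder (v₀ F₁ F₂ : ℝ → ℝ) (μ₀ : Measure ℝ) : Prop :=
  ∀ m : ℝ → ℝ, Monotone m → (∀ x, 0 ≤ m x) →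
    ∫⁻ x, ENNReal.ofReal (1 - v₀ (F₁ x)) ∂(μ₀.withDensity fun x => ENNReal.ofReal (m x)) ≤
      ∫⁻ x, ENNReal.ofReal (1 - v₀ (F₂ x)) ∂(μ₀.withDensity fun x => ENNReal.ofReal (m x))

/-- Condition (a): `∫_ℝ |u₀(x)| dv₀(F(x)) < ∞`, where `ν` is the Stieltjes measure
of `v₀ ∘ F`. -/
def CondA (u₀ : ℝ → ℝ) (ν : Measure ℝ) : Prop :=
  ∫⁻ x, ENNReal.ofReal |u₀ x| ∂ν < ⊤

/-- Condition (b): `∫_{[0,p)} v₀(α) du₀(F⁻¹(α)) < ∞` for all `p < 1`, where `lam` is the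
Stieltjes measure of `u₀ ∘ F⁻¹` on `(0,1)`. -/
def CondB (v₀ : ℝ → ℝ) (lam : Measure ℝ) : Prop :=
  ∀ p : ℝ, p < 1 → ∫⁻ α in Ioo 0 p, ENNReal.ofReal (v₀ α) ∂lam < ⊤

/-- Condition (b)': `∫_ℝ (1 - v₀(F(x))) du₀(x) < ∞`, where `μ₀` is the Stieltjes
measure of `u₀`. -/
def CondB' (v₀ F : ℝ → ℝ) (μ₀ : Measure ℝ) : Prop :=
  ∫⁻ x, ENNReal.ofReal (1 - v₀ (F x)) ∂μ₀ < ⊤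


/-!
Let `m` be `η` restricted to `(0,1)` and `Gᵢ = u₀ ∘ Fᵢ⁻¹`, non-decreasing on `(0,1)`. The quantile
function pushes `m` forward to `d(v₀ ∘ F)`, so condition (a) says `Gᵢ ∈ L¹(m)`, and Tonelli on
`{(x, α) | α ≤ F x}` turns `∫_{x < c} v₀(F x) du₀` into the stop-loss transform
`∫ (u₀ c - G α)⁺ dm`. Hence (i) compares stop-loss transforms and (ii) compares integrals over the
initial segments `(0,p]`. For monotone `G` the positive part of `t - G` lives on the initial
segment `{G ≤ t}`: the level `t = G₁ p` cuts exactly at `(0,p]`, which gives (i) ⇒ (ii); for the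
converse, `{G₂ ≤ t}` is `(0,p]` or `(0,p)`, the latter being an increasing union of `(0,q]`.
-/

namespace IsCDF

variable {F : ℝ → ℝ}

theorem nonneg (hF : IsCDF F) (x : ℝ) : 0 ≤ F x :=
  le_of_tendsto hF.tendsto_atBot (eventually_atBot.2 ⟨x, fun _ hy => hF.mono hy⟩)

theorem le_one (hF : IsCDF F) (x : ℝ) : F x ≤ 1 :=
  ge_of_tendsto hF.tendsto_atTop (eventually_atTop.2 ⟨x, fun _ hy => hF.mono hy⟩)

theorem qf_le_iff (hF : IsCDF F) {α : ℝ} (hα : α ∈ Ioo (0:ℝ) 1) (x : ℝ) :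
    qf F α ≤ x ↔ α ≤ F x := by
  have hne : {x | α ≤ F x}.Nonempty := by
    obtain ⟨b, hb⟩ := (hF.tendsto_atTop.eventually (eventually_gt_nhds hα.2)).exists
    exact ⟨b, hb.le⟩
  have hbdd : BddBelow {x | α ≤ F x} := by
    obtain ⟨a, ha⟩ := (hF.tendsto_atBot.eventually (eventually_lt_nhds hα.1)).exists
    exact ⟨a, fun y hy => not_lt.1 fun hya => (ha.trans_le' (hF.mono hya.le)).not_ge hy⟩
  have hmem : α ≤ F (qf F α) := by
    have : (𝓝[{x | α ≤ F x}] qf F α).NeBot :=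
      mem_closure_iff_nhdsWithin_neBot.1 (csInf_mem_closure hne hbdd)
    have hlim : Tendsto F (𝓝[{x | α ≤ F x}] qf F α) (𝓝 (F (qf F α))) :=
      (hF.right_cont _).mono_left (nhdsWithin_mono _ fun y hy => csInf_le hbdd hy)
    exact ge_of_tendsto hlim (eventually_nhdsWithin_of_forall fun _ hy => hy)
  exact ⟨fun h => hmem.trans (hF.mono h), fun h => csInf_le hbdd h⟩

theorem lt_qf_iff (hF : IsCDF F) {α : ℝ} (hα : α ∈ Ioo (0:ℝ) 1) (x : ℝ) :
    x < qf F α ↔ F x < α := by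
  rw [← not_le, ← not_le, hF.qf_le_iff hα]

theorem qf_monotoneOn (hF : IsCDF F) : MonotoneOn (qf F) (Ioo 0 1) :=
  fun _ ha _ hb hab => (hF.qf_le_iff ha _).2 (hab.trans ((hF.qf_le_iff hb _).1 le_rfl))

theorem monotoneOn_comp_qf (hF : IsCDF F) {u : ℝ → ℝ} (hu : Monotone u) :
    MonotoneOn (fun α => u (qf F α)) (Ioo 0 1) :=
  hu.comp_monotoneOn hF.qf_monotoneOn

end IsCDF

namespace IsLSR01

variable {v₀ : ℝ → ℝ} {η : Measure ℝ}

theorem measure_singleton_one (hη : IsLSR01 v₀ η) (hv₁ : v₀ 1 ≤ 1)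
    (hv : Tendsto v₀ (𝓝[<] 1) (𝓝 1)) : η {1} = 0 := by
  have hle : ∀ᶠ a in 𝓝[<] (1:ℝ), η {1} ≤ ENNReal.ofReal (v₀ 1 - v₀ a) := by
    filter_upwards [Ioo_mem_nhdsLT zero_lt_one] with a ha
    rw [← hη a 1 ha.1.le ha.2.le le_rfl]
    exact measure_mono (singleton_subset_iff.2 ⟨ha.2, le_rfl⟩)
  have hlim := ENNReal.tendsto_ofReal ((tendsto_const_nhds (x := v₀ 1)).sub hv)
  rw [ENNReal.ofReal_eq_zero.2 (sub_nonpos.2 hv₁)] at hlim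
  exact nonpos_iff_eq_zero.1 (ge_of_tendsto hlim hle)

/-- At `α = 1` the quantile function is junk, so everything is done on `(0,1)`; this loses no
mass since `v₀ 1 ≤ 1 = v₀ (1⁻)`. -/
theorem restrict_Ioo (hη : IsLSR01 v₀ η) (hv₁ : v₀ 1 ≤ 1) (hv : Tendsto v₀ (𝓝[<] 1) (𝓝 1)) :
    IsLSR01 v₀ (η.restrict (Ioo 0 1)) := by
  intro s t hs hst ht
  have hset : Ioc s t ∩ Ioo 0 1 = Ioc s t \ {1} := by
    ext α
    simp only [mem_inter_iff, mem_Ioc, mem_Ioo, Set.mem_sdiff, mem_singleton_iff]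
    constructor
    · rintro ⟨hα, -, hα₁⟩
      exact ⟨hα, hα₁.ne⟩
    · rintro ⟨hα, hα₁⟩
      exact ⟨hα, hs.trans_lt hα.1, lt_of_le_of_ne (hα.2.trans ht) hα₁⟩
  rw [Measure.restrict_apply measurableSet_Ioc, hset,
    measure_sdiff_null (hη.measure_singleton_one hv₁ hv), hη s t hs hst ht]

theorem isFiniteMeasure_restrict_Ioo (hη : IsLSR01 v₀ η) :
    IsFiniteMeasure (η.restrict (Ioo 0 1)) :=
  isFiniteMeasure_restrict.2 (ne_top_of_le_ne_top (by simp [hη 0 1 le_rfl zero_le_one le_rfl])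
    (measure_mono Ioo_subset_Ioc_self))

theorem measure_Iic {m : Measure ℝ} (hmv : IsLSR01 v₀ m) (hm : ∀ᵐ α ∂m, α ∈ Ioo 0 1)
    (hv₀ : v₀ 0 = 0) {t : ℝ} (ht₀ : 0 ≤ t) (ht₁ : t ≤ 1) :
    m (Iic t) = ENNReal.ofReal (v₀ t) := by
  have hIic : m (Iic 0) = 0 :=
    measure_mono_null (fun α (hα : α ≤ 0) (hα' : α ∈ Ioo 0 1) => hα.not_gt hα'.1) (ae_iff.1 hm)
  rw [← measure_sdiff_null hIic, Set.sdiff_eq, compl_Iic, inter_comm, Ioi_inter_Iic,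
    hmv 0 t le_rfl ht₀ ht₁, hv₀, sub_zero]

end IsLSR01

section QuantileTransform

variable {u₀ v₀ F : ℝ → ℝ} {m ν : Measure ℝ}

theorem IsCDF.aemeasurable_qf (hF : IsCDF F) (hm : ∀ᵐ α ∂m, α ∈ Ioo 0 1) :
    AEMeasurable (qf F) m := by
  rw [← Measure.restrict_eq_self_of_ae_mem hm]
  exact aemeasurable_restrict_of_monotoneOn measurableSet_Ioo hF.qf_monotoneOn

theorem IsCDF.preimage_qf_Ioc_inter (hF : IsCDF F) (a b : ℝ) :
    qf F ⁻¹' Ioc a b ∩ Ioo 0 1 = Ioc (F a) (F b) ∩ Ioo 0 1 := by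
  ext α
  simp only [mem_inter_iff, mem_preimage, mem_Ioc]
  constructor
  · rintro ⟨⟨ha, hb⟩, hα⟩
    exact ⟨⟨(hF.lt_qf_iff hα a).1 ha, (hF.qf_le_iff hα b).1 hb⟩, hα⟩
  · rintro ⟨⟨ha, hb⟩, hα⟩
    exact ⟨⟨(hF.lt_qf_iff hα a).2 ha, (hF.qf_le_iff hα b).2 hb⟩, hα⟩

theorem IsLSR.eq_map_qf (hν : IsLSR (fun x => v₀ (F x)) ν) (hF : IsCDF F)
    (hmv : IsLSR01 v₀ m) (hm : ∀ᵐ α ∂m, α ∈ Ioo 0 1) :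
    ν = m.map (qf F) := by
  refine Measure.ext_of_Ioc' ν _ (fun a b hab => by simp [hν a b hab.le]) fun a b hab => ?_
  rw [Measure.map_apply_of_aemeasurable (hF.aemeasurable_qf hm) measurableSet_Ioc,
    ← measure_inter_conull (t := Ioo 0 1) hm, hF.preimage_qf_Ioc_inter,
    measure_inter_conull (t := Ioo 0 1) hm,
    hmv _ _ (hF.nonneg a) (hF.mono hab.le) (hF.le_one b), hν a b hab.le]

theorem CondA.integrable_comp_qf (ha : CondA u₀ ν) (hu : Measurable u₀)
    (hν : IsLSR (fun x => v₀ (F x)) ν) (hF : IsCDF F) (hmv : IsLSR01 v₀ m)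
    (hm : ∀ᵐ α ∂m, α ∈ Ioo 0 1) :
    Integrable (fun α => u₀ (qf F α)) m := by
  have hint : Integrable u₀ ν :=
    ⟨hu.aestronglyMeasurable, (hasFiniteIntegral_iff_norm _).2 (by simpa only [Real.norm_eq_abs])⟩
  rw [hν.eq_map_qf hF hmv hm] at hint
  exact hint.comp_aemeasurable (hF.aemeasurable_qf hm)

end QuantileTransform

namespace IsLSL

variable {g : ℝ → ℝ} {μ : Measure ℝ}

theorem measure_Ico (hμ : IsLSL g μ) (hg : Monotone g) (a b : ℝ) :
    μ (Ico a b) = ENNReal.ofReal (g b - g a) := by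
  rcases le_total a b with hab | hba
  · exact hμ a b hab
  · rw [Ico_eq_empty_of_le hba, measure_empty, eq_comm, ENNReal.ofReal_eq_zero, sub_nonpos]
    exact hg hba

theorem isFiniteMeasureOnCompacts (hμ : IsLSL g μ) : IsFiniteMeasureOnCompacts μ := by
  refine ⟨fun K hK => ?_⟩
  obtain ⟨a, ha⟩ := hK.bddBelow
  obtain ⟨b, hb⟩ := hK.bddAbove
  have hsub : K ⊆ Ico a (max a b + 1) :=
    fun x hx => ⟨ha hx, (hb hx).trans_lt ((le_max_right a b).trans_lt (lt_add_one _))⟩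
  refine (measure_mono hsub).trans_lt ?_
  rw [hμ _ _ ((le_max_left a b).trans (le_add_of_nonneg_right zero_le_one))]
  exact ENNReal.ofReal_lt_top

end IsLSL

theorem lintegral_Iio_comp_eq_lintegral_comp_qf {u₀ v₀ F : ℝ → ℝ} {μ₀ m : Measure ℝ} [SFinite m]
    (hu : Monotone u₀) (hμ₀ : IsLSL u₀ μ₀) (hF : IsCDF F) (hmv : IsLSR01 v₀ m)
    (hm : ∀ᵐ α ∂m, α ∈ Ioo 0 1) (hv₀ : v₀ 0 = 0) (c : ℝ) :
    ∫⁻ x in Iio c, ENNReal.ofReal (v₀ (F x)) ∂μ₀ =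
      ∫⁻ α, ENNReal.ofReal (u₀ c - u₀ (qf F α)) ∂m := by
  have := hμ₀.isFiniteMeasureOnCompacts
  have hE : MeasurableSet {z : ℝ × ℝ | z.2 ≤ F z.1} :=
    measurableSet_le measurable_snd (hF.mono.measurable.comp measurable_fst)
  calc ∫⁻ x in Iio c, ENNReal.ofReal (v₀ (F x)) ∂μ₀
      = ∫⁻ x in Iio c, m (Prod.mk x ⁻¹' {z : ℝ × ℝ | z.2 ≤ F z.1}) ∂μ₀ := by
        refine lintegral_congr fun x => ?_
        exact (hmv.measure_Iic hm hv₀ (hF.nonneg x) (hF.le_one x)).symm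
    _ = ∫⁻ α, μ₀.restrict (Iio c) ((fun x => (x, α)) ⁻¹' {z : ℝ × ℝ | z.2 ≤ F z.1}) ∂m := by
        rw [← Measure.prod_apply hE, Measure.prod_apply_symm hE]
    _ = ∫⁻ α, ENNReal.ofReal (u₀ c - u₀ (qf F α)) ∂m := by
        refine lintegral_congr_ae (hm.mono fun α hα => ?_)
        have hslice : (fun x => (x, α)) ⁻¹' {z : ℝ × ℝ | z.2 ≤ F z.1} = Ici (qf F α) :=
          ext fun x => (hF.qf_le_iff hα x).symm
        dsimp only
        rw [hslice, Measure.restrict_apply measurableSet_Ici, Ici_inter_Iio,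
          hμ₀.measure_Ico hu]

theorem exists_eq_Ioo_or_eq_Ioc_of_Ioc_subset {S : Set ℝ} (hS : S ⊆ Ioo 0 1)
    (hlow : ∀ a ∈ S, Ioc 0 a ⊆ S) :
    ∃ p ≤ 1, S = Ioo 0 p ∨ (p ∈ Ioo 0 1 ∧ S = Ioc 0 p) := by
  rcases S.eq_empty_or_nonempty with rfl | hne
  · exact ⟨0, zero_le_one, Or.inl (Ioo_self 0).symm⟩
  have hbdd : BddAbove S := ⟨1, fun x hx => (hS hx).2.le⟩
  refine ⟨sSup S, csSup_le hne fun x hx => (hS hx).2.le, ?_⟩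
  by_cases hmem : sSup S ∈ S
  · exact Or.inr ⟨hS hmem, subset_antisymm (fun x hx => ⟨(hS hx).1, le_csSup hbdd hx⟩)
      (hlow _ hmem)⟩
  · refine Or.inl (subset_antisymm (fun x hx => ⟨(hS hx).1, (le_csSup hbdd hx).lt_of_ne
      fun h => hmem (h ▸ hx)⟩) fun x hx => ?_)
    obtain ⟨y, hy, hxy⟩ := exists_lt_of_lt_csSup hne hx.2
    exact hlow y hy ⟨hx.1, hxy.le⟩

theorem setIntegral_restrict_Ioo_of_lt_one {η : Measure ℝ} {f : ℝ → ℝ} {p : ℝ} (hp : p < 1) :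
    ∫ α in Ioc 0 p, f α ∂(η.restrict (Ioo 0 1)) = ∫ α in Ioc 0 p, f α ∂η := by
  rw [Measure.restrict_restrict_of_subset (Ioc_subset_Ioo_right hp)]

section StopLoss

variable {m : Measure ℝ} {G G₁ G₂ : ℝ → ℝ} {s : Set ℝ} {t : ℝ}

theorem lintegral_ofReal_sub_eq_ofReal_integral_max [IsFiniteMeasure m] (hG : Integrable G m)
    (t : ℝ) : ∫⁻ α, ENNReal.ofReal (t - G α) ∂m = ENNReal.ofReal (∫ α, max (t - G α) 0 ∂m) := by
  have hmax : Integrable (fun α => max (t - G α) 0) m := ((integrable_const t).sub hG).pos_part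
  rw [ofReal_integral_eq_lintegral_ofReal hmax (ae_of_all _ fun _ => le_max_right _ _)]
  simp

theorem integral_max_sub_eq_setIntegral (hs : MeasurableSet s)
    (hin : ∀ᵐ α ∂m, α ∈ s → G α ≤ t) (hout : ∀ᵐ α ∂m, α ∉ s → t ≤ G α) :
    ∫ α, max (t - G α) 0 ∂m = ∫ α in s, (t - G α) ∂m := by
  rw [← setIntegral_eq_integral_of_ae_compl_eq_zero
    (hout.mono fun α h hα => max_eq_right (sub_nonpos.2 (h hα)))]
  exact setIntegral_congr_ae hs (hin.mono fun α h hα => max_eq_left (sub_nonneg.2 (h hα)))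

theorem setIntegral_sub_le_integral_max [IsFiniteMeasure m] (hG : Integrable G m) (s : Set ℝ) :
    ∫ α in s, (t - G α) ∂m ≤ ∫ α, max (t - G α) 0 ∂m := by
  have hmax : Integrable (fun α => max (t - G α) 0) m := ((integrable_const t).sub hG).pos_part
  calc ∫ α in s, (t - G α) ∂m ≤ ∫ α in s, max (t - G α) 0 ∂m :=
        setIntegral_mono ((integrable_const t).sub hG).integrableOn hmax.integrableOn
          fun _ => le_max_left _ _
    _ ≤ ∫ α, max (t - G α) 0 ∂m :=
        setIntegral_le_integral hmax (ae_of_all _ fun _ => le_max_right _ _)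

theorem setIntegral_const_sub_le_iff [IsFiniteMeasure m] (h₁ : Integrable G₁ m)
    (h₂ : Integrable G₂ m) :
    ∫ α in s, (t - G₂ α) ∂m ≤ ∫ α in s, (t - G₁ α) ∂m ↔
      ∫ α in s, G₁ α ∂m ≤ ∫ α in s, G₂ α ∂m := by
  rw [integral_sub (integrable_const t).integrableOn h₁.integrableOn,
    integral_sub (integrable_const t).integrableOn h₂.integrableOn, sub_le_sub_iff_left]

theorem setIntegral_Ioo_le_of_forall_Ioc {a p : ℝ} (h₁ : Integrable G₁ m) (h₂ : Integrable G₂ m)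
    (h : ∀ q < p, ∫ α in Ioc a q, G₁ α ∂m ≤ ∫ α in Ioc a q, G₂ α ∂m) :
    ∫ α in Ioo a p, G₁ α ∂m ≤ ∫ α in Ioo a p, G₂ α ∂m := by
  have hU : ⋃ n : ℕ, Ioc a (p - 1 / (n + 1)) = Ioo a p := by
    ext x
    simp only [mem_iUnion, mem_Ioc, mem_Ioo]
    constructor
    · rintro ⟨n, hax, hxp⟩
      exact ⟨hax, hxp.trans_lt (sub_lt_self p Nat.one_div_pos_of_nat)⟩
    · rintro ⟨hax, hxp⟩
      obtain ⟨n, hn⟩ := exists_nat_one_div_lt (sub_pos.2 hxp)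
      exact ⟨n, hax, by linarith⟩
  have hmono : Monotone fun n : ℕ => Ioc a (p - 1 / (n + 1)) :=
    fun i j hij => Ioc_subset_Ioc_right (sub_le_sub_left (Nat.one_div_le_one_div hij) p)
  have hlim₁ := tendsto_setIntegral_of_monotone (fun _ => measurableSet_Ioc) hmono h₁.integrableOn
  have hlim₂ := tendsto_setIntegral_of_monotone (fun _ => measurableSet_Ioc) hmono h₂.integrableOn
  rw [hU] at hlim₁ hlim₂
  exact le_of_tendsto_of_tendsto' hlim₁ hlim₂ fun n => h _ (sub_lt_self p Nat.one_div_pos_of_nat)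

theorem setIntegral_Ioc_le_of_integral_max_sub_le [IsFiniteMeasure m]
    (hm : ∀ᵐ α ∂m, α ∈ Ioo 0 1) (hG₁ : MonotoneOn G₁ (Ioo 0 1)) (h₁ : Integrable G₁ m)
    (h₂ : Integrable G₂ m) {p : ℝ} (hp : p ∈ Ioo 0 1)
    (h : ∫ α, max (G₁ p - G₂ α) 0 ∂m ≤ ∫ α, max (G₁ p - G₁ α) 0 ∂m) :
    ∫ α in Ioc 0 p, G₁ α ∂m ≤ ∫ α in Ioc 0 p, G₂ α ∂m := by
  rw [← setIntegral_const_sub_le_iff (t := G₁ p) h₁ h₂]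
  calc ∫ α in Ioc 0 p, (G₁ p - G₂ α) ∂m ≤ ∫ α, max (G₁ p - G₂ α) 0 ∂m :=
        setIntegral_sub_le_integral_max h₂ _
    _ ≤ ∫ α, max (G₁ p - G₁ α) 0 ∂m := h
    _ = ∫ α in Ioc 0 p, (G₁ p - G₁ α) ∂m :=
        integral_max_sub_eq_setIntegral measurableSet_Ioc
          (hm.mono fun α hα hαp => hG₁ hα hp hαp.2)
          (hm.mono fun α hα hαp => hG₁ hp hα (not_le.1 fun h => hαp ⟨hα.1, h⟩).le)

theorem integral_max_sub_le_of_setIntegral_Ioc_le [IsFiniteMeasure m]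
    (hm : ∀ᵐ α ∂m, α ∈ Ioo 0 1) (hG₂ : MonotoneOn G₂ (Ioo 0 1)) (h₁ : Integrable G₁ m)
    (h₂ : Integrable G₂ m)
    (h : ∀ p, 0 ≤ p → p < 1 → ∫ α in Ioc 0 p, G₁ α ∂m ≤ ∫ α in Ioc 0 p, G₂ α ∂m) (t : ℝ) :
    ∫ α, max (t - G₂ α) 0 ∂m ≤ ∫ α, max (t - G₁ α) 0 ∂m := by
  set S := {α | α ∈ Ioo (0:ℝ) 1 ∧ G₂ α ≤ t}
  obtain ⟨p, hp, hS⟩ := exists_eq_Ioo_or_eq_Ioc_of_Ioc_subset (S := S) (fun _ hα => hα.1)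
    fun a ha x hx => ⟨⟨hx.1, hx.2.trans_lt ha.1.2⟩,
      (hG₂ ⟨hx.1, hx.2.trans_lt ha.1.2⟩ ha.1 hx.2).trans ha.2⟩
  have hSG : MeasurableSet S ∧ ∫ α in S, G₁ α ∂m ≤ ∫ α in S, G₂ α ∂m := by
    rcases hS with hS | ⟨hp', hS⟩ <;> rw [hS]
    · refine ⟨measurableSet_Ioo, setIntegral_Ioo_le_of_forall_Ioc h₁ h₂ fun q hq => ?_⟩
      rcases lt_or_ge q 0 with hq₀ | hq₀
      · simp [Ioc_eq_empty_of_le hq₀.le]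
      · exact h q hq₀ (hq.trans_le hp)
    · exact ⟨measurableSet_Ioc, h p hp'.1.le hp'.2⟩
  calc ∫ α, max (t - G₂ α) 0 ∂m = ∫ α in S, (t - G₂ α) ∂m :=
        integral_max_sub_eq_setIntegral hSG.1 (ae_of_all _ fun _ hα => hα.2)
          (hm.mono fun α hα hαS => le_of_not_ge fun h => hαS ⟨hα, h⟩)
    _ ≤ ∫ α in S, (t - G₁ α) ∂m := (setIntegral_const_sub_le_iff h₁ h₂).2 hSG.2
    _ ≤ ∫ α, max (t - G₁ α) 0 ∂m := setIntegral_sub_le_integral_max h₁ S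

end StopLoss

/-- **Lemma 1.**  Let `(u₀,v₀)` be a standard pair and `F₁, F₂` cdf's
satisfying condition (a).  Then
(i) `∫_{-∞}^{c} v₀(F₁) du₀ ≥ ∫_{-∞}^{c} v₀(F₂) du₀` for all `c ∈ ℝ`
is equivalent to
(ii) `∫_{0}^{p} u₀(F₁⁻¹) dv₀ ≤ ∫_{0}^{p} u₀(F₂⁻¹) dv₀` for all `p ∈ [0,1)`.
Here `μ₀` is the Stieltjes measure of `u₀` (`[a,b)` convention), `η` the Stieltjes
measure of `v₀` on `[0,1]` (`(a,b]` convention), and `ν₁, ν₂` those of `v₀ ∘ F₁`,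
`v₀ ∘ F₂` (`(a,b]` convention, entering condition (a)). -/
theorem lemma1_duality
    (u₀ v₀ F₁ F₂ : ℝ → ℝ) (hpair : StandardPair u₀ v₀)
    (hF₁ : IsCDF F₁) (hF₂ : IsCDF F₂)
    (μ₀ : Measure ℝ) (hμ₀ : IsLSL u₀ μ₀)
    (η : Measure ℝ) (hη : IsLSR01 v₀ η)
    (ν₁ ν₂ : Measure ℝ)
    (hν₁ : IsLSR (fun x => v₀ (F₁ x)) ν₁) (hν₂ : IsLSR (fun x => v₀ (F₂ x)) ν₂)
    (ha₁ : CondA u₀ ν₁) (ha₂ : CondA u₀ ν₂) :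
    (∀ c : ℝ,
      ∫⁻ x in Iio c, ENNReal.ofReal (v₀ (F₂ x)) ∂μ₀ ≤
        ∫⁻ x in Iio c, ENNReal.ofReal (v₀ (F₁ x)) ∂μ₀) ↔
    (∀ p : ℝ, 0 ≤ p → p < 1 →
      ∫ α in Ioc 0 p, u₀ (qf F₁ α) ∂η ≤ ∫ α in Ioc 0 p, u₀ (qf F₂ α) ∂η) := by
  have hm : ∀ᵐ α ∂η.restrict (Ioo 0 1), α ∈ Ioo 0 1 := ae_restrict_mem measurableSet_Ioo
  have hmv := hη.restrict_Ioo (hpair.v_mem 1 ⟨zero_le_one, le_rfl⟩).2 hpair.v_one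
  have := hη.isFiniteMeasure_restrict_Ioo
  have hG₁ := ha₁.integrable_comp_qf hpair.u_mono.measurable hν₁ hF₁ hmv hm
  have hG₂ := ha₂.integrable_comp_qf hpair.u_mono.measurable hν₂ hF₂ hmv hm
  have hstop : ∀ c, (∫⁻ x in Iio c, ENNReal.ofReal (v₀ (F₂ x)) ∂μ₀ ≤
        ∫⁻ x in Iio c, ENNReal.ofReal (v₀ (F₁ x)) ∂μ₀) ↔
      ∫ α in Ioo 0 1, max (u₀ c - u₀ (qf F₂ α)) 0 ∂η ≤
        ∫ α in Ioo 0 1, max (u₀ c - u₀ (qf F₁ α)) 0 ∂η := fun c => by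
    simp only [lintegral_Iio_comp_eq_lintegral_comp_qf hpair.u_mono hμ₀ _ hmv hm hpair.v_zero c,
      hF₁, hF₂, lintegral_ofReal_sub_eq_ofReal_integral_max, hG₁, hG₂]
    exact ENNReal.ofReal_le_ofReal_iff (integral_nonneg fun _ => le_max_right _ _)
  constructor
  · intro hi p hp₀ hp₁
    rcases hp₀.eq_or_lt with rfl | hp₀
    · simp
    simpa only [setIntegral_restrict_Ioo_of_lt_one hp₁] using
      setIntegral_Ioc_le_of_integral_max_sub_le hm (hF₁.monotoneOn_comp_qf hpair.u_mono) hG₁ hG₂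
        ⟨hp₀, hp₁⟩ ((hstop _).1 (hi _))
  · intro hii c
    refine (hstop c).2 (integral_max_sub_le_of_setIntegral_Ioc_le hm
      (hF₂.monotoneOn_comp_qf hpair.u_mono) hG₁ hG₂ (fun p hp₀ hp₁ => ?_) _)
    simpa only [setIntegral_restrict_Ioo_of_lt_one hp₁] using hii p hp₀ hp₁
end
end

section
/- Let (u₀,v₀) be a standard pair, U⁰ the class of non-decreasing u₀-concave functions, and let F₁, F₂ be cdf's satisfying conditions (a) and (b). Then F₁ ≺^{(u₀,v₀)} F₂ holds if and only if ∫_{-∞}^{∞} u(x) dv₀(F₁(x)) ≤ ∫_{-∞}^{∞} u(x) dv₀(F₂(x)) for all u ∈ U⁰. -/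
open MeasureTheory Set Filter Topology Function

noncomputable section

/-!
Write `m = k · μ₀` for the measure `du` and `ν = d v₀(F)`. By Tonelli,
`∫ v₀(F) du = ∫ m [x, ∞) dν(x)`. When the tails `m [x, ∞)` are finite, `u x + m [x, ∞)` is
constant, so `∫ v₀(F) du = c - ∫ u dν` and (i) and (iii) are the same inequality. When the tails
are infinite, both sides of the upper ordering are `∞`, so (iii) ⇒ (i) is trivial, while
(i) ⇒ (iii) follows by truncating `k` to `(-∞, n)`, which replaces `u` by `u (min x n)`, and
letting `n → ∞` by monotone convergence.
-/

open scoped ENNReal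

lemma measure_Ici_eq_top_iff {m : Measure ℝ} (hm : ∀ a b, m (Ico a b) ≠ ∞) (x y : ℝ) :
    m (Ici x) = ∞ ↔ m (Ici y) = ∞ := by
  suffices h : ∀ x y, m (Ici x) = ∞ → m (Ici y) = ∞ from ⟨h x y, h y x⟩
  intro x y hx
  have hle : m (Ici x) ≤ m (Ico x y) + m (Ici y) :=
    (measure_mono Ici_subset_Ico_union_Ici).trans (measure_union_le _ _)
  rw [hx, top_le_iff, ENNReal.add_eq_top] at hle
  exact hle.resolve_left (hm x y)

lemma measureReal_Ici_eq_add {m : Measure ℝ} {a b : ℝ} (hab : a ≤ b) (hm : m (Ici a) ≠ ∞) :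
    m.real (Ici a) = m.real (Ico a b) + m.real (Ici b) := by
  rw [← Ico_union_Ici_eq_Ici hab]
  exact measureReal_union ((Iio_disjoint_Ici le_rfl).mono_left Ico_subset_Iio_self)
    measurableSet_Ici (measure_ne_top_of_subset Ico_subset_Ici_self hm)
    (measure_ne_top_of_subset (Ici_subset_Ici.2 hab) hm)

lemma lintegral_measure_Iic_eq_lintegral_measure_Ici (m ν : Measure ℝ) [SFinite m] [SFinite ν] :
    ∫⁻ s, ν (Iic s) ∂m = ∫⁻ x, m (Ici x) ∂ν := by
  have hE : MeasurableSet {p : ℝ × ℝ | p.1 ≤ p.2} := measurableSet_le measurable_fst measurable_snd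
  exact (Measure.prod_apply_symm hE).symm.trans (Measure.prod_apply hE)

lemma Monotone.tendsto_integral_comp_min {ν : Measure ℝ} {u : ℝ → ℝ} (hu : Monotone u)
    (hi : Integrable u ν) (hin : ∀ n : ℕ, Integrable (fun x => u (min x n)) ν) :
    Tendsto (fun n : ℕ => ∫ x, u (min x n) ∂ν) atTop (𝓝 (∫ x, u x ∂ν)) := by
  refine integral_tendsto_of_tendsto_of_monotone hin hi
    (Eventually.of_forall fun x n n' hnn' => hu (min_le_min_left x (Nat.cast_le.2 hnn')))
    (Eventually.of_forall fun x => tendsto_const_nhds.congr' ?_)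
  filter_upwards [tendsto_natCast_atTop_atTop.eventually_ge_atTop x] with n hn
  rw [min_eq_left hn]

lemma Antitone.indicator_Iio {k : ℝ → ℝ} (hk : Antitone k) (hk0 : ∀ x, 0 ≤ k x) (t : ℝ) :
    Antitone ((Iio t).indicator k) := by
  intro x y hxy
  by_cases hy : y ∈ Iio t
  · rw [indicator_of_mem hy, indicator_of_mem (mem_Iio.2 (hxy.trans_lt hy))]
    exact hk hxy
  · rw [indicator_of_notMem hy]
    exact indicator_nonneg (fun x _ => hk0 x) x

namespace IsLSL

variable {g : ℝ → ℝ} {μ : Measure ℝ}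

lemma measure_Ico_le (h : IsLSL g μ) (a b : ℝ) : μ (Ico a b) ≤ ENNReal.ofReal |g b - g a| := by
  rcases le_or_gt a b with hab | hab
  · rw [h a b hab]
    exact ENNReal.ofReal_le_ofReal (le_abs_self _)
  · simp [Ico_eq_empty_of_le hab.le]

lemma measure_Ico_ne_top (h : IsLSL g μ) (a b : ℝ) : μ (Ico a b) ≠ ∞ :=
  ne_top_of_le_ne_top ENNReal.ofReal_ne_top (h.measure_Ico_le a b)

lemma sigmaFinite (h : IsLSL g μ) : SigmaFinite μ := by
  refine ⟨⟨⟨fun n : ℕ => Ico (-n : ℝ) n, fun _ => trivial,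
    fun n => (h.measure_Ico_ne_top _ _).lt_top, iUnion_eq_univ_iff.2 fun x => ?_⟩⟩⟩
  obtain ⟨n, hn⟩ := exists_nat_gt |x|
  exact ⟨n, (abs_lt.1 hn).1.le, (abs_lt.1 hn).2⟩

lemma measure_Ico_ne_top_of_le_smul (h : IsLSL g μ) {m : Measure ℝ} {c : ℝ≥0∞} (hc : c ≠ ∞)
    (hm : m ≤ c • μ) (a b : ℝ) : m (Ico a b) ≠ ∞ :=
  ne_top_of_le_ne_top (ENNReal.mul_ne_top hc (h.measure_Ico_ne_top a b)) (hm _)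

end IsLSL

namespace IsLSR

variable {g : ℝ → ℝ} {ν : Measure ℝ}

lemma measure_Iic (h : IsLSR g ν) (hg : Tendsto g atBot (𝓝 0)) (x : ℝ) :
    ν (Iic x) = ENNReal.ofReal (g x) := by
  refine tendsto_nhds_unique (tendsto_measure_Ioc_atBot ν x) ?_
  have hlim := ENNReal.tendsto_ofReal ((tendsto_const_nhds (x := g x)).sub hg)
  rw [sub_zero] at hlim
  refine hlim.congr' ?_
  filter_upwards [eventually_le_atBot x] with y hy using (h y x hy).symm

lemma isProbabilityMeasure (h : IsLSR g ν) (hg₀ : Tendsto g atBot (𝓝 0))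
    (hg₁ : Tendsto g atTop (𝓝 1)) : IsProbabilityMeasure ν := by
  refine ⟨tendsto_nhds_unique (tendsto_measure_Iic_atTop ν) ?_⟩
  simpa only [h.measure_Iic hg₀, ENNReal.ofReal_one] using ENNReal.tendsto_ofReal hg₁

lemma lintegral_ofReal_eq_lintegral_measure_Ici (h : IsLSR g ν) (hg : Tendsto g atBot (𝓝 0))
    (m : Measure ℝ) [SFinite m] [SFinite ν] :
    ∫⁻ x, ENNReal.ofReal (g x) ∂m = ∫⁻ x, m (Ici x) ∂ν := by
  simp_rw [← h.measure_Iic hg]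
  exact lintegral_measure_Iic_eq_lintegral_measure_Ici m ν

end IsLSR

lemma CondA.integrable {u₀ : ℝ → ℝ} {ν : Measure ℝ} (ha : CondA u₀ ν)
    (hu₀ : AEStronglyMeasurable u₀ ν) : Integrable u₀ ν :=
  ⟨hu₀, (hasFiniteIntegral_iff_norm u₀).2 (by simp only [Real.norm_eq_abs]; exact ha)⟩

lemma IsCDF.mem_Icc {F : ℝ → ℝ} (hF : IsCDF F) (x : ℝ) : F x ∈ Icc (0 : ℝ) 1 :=
  ⟨le_of_tendsto hF.tendsto_atBot (eventually_atBot.2 ⟨x, fun _ hy => hF.mono hy⟩),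
   ge_of_tendsto hF.tendsto_atTop (eventually_atTop.2 ⟨x, fun _ hy => hF.mono hy⟩)⟩

namespace StandardPair

variable {u₀ v₀ F : ℝ → ℝ}

lemma v_one_eq (hp : StandardPair u₀ v₀) : v₀ 1 = 1 := by
  refine le_antisymm (hp.v_mem 1 (by simp)).2 (le_of_tendsto hp.v_one ?_)
  filter_upwards [Ioo_mem_nhdsLT zero_lt_one] with α hα
  exact hp.v_mono ⟨hα.1.le, hα.2.le⟩ (by simp) hα.2.le

lemma tendsto_comp_atBot (hp : StandardPair u₀ v₀) (hF : IsCDF F) :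
    Tendsto (fun x => v₀ (F x)) atBot (𝓝 0) := by
  have hv : ContinuousWithinAt v₀ (Ici 0) 0 :=
    continuousWithinAt_Ioi_iff_Ici.1 (hp.v_right_cont 0 (by simp))
  rw [ContinuousWithinAt, hp.v_zero] at hv
  exact hv.comp (tendsto_nhdsWithin_iff.2
    ⟨hF.tendsto_atBot, Eventually.of_forall fun x => (hF.mem_Icc x).1⟩)

lemma tendsto_comp_atTop (hp : StandardPair u₀ v₀) (hF : IsCDF F) :
    Tendsto (fun x => v₀ (F x)) atTop (𝓝 1) := by
  have hv : ContinuousWithinAt v₀ (Iic 1) 1 :=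
    continuousWithinAt_Iio_iff_Iic.1 (by rw [ContinuousWithinAt, hp.v_one_eq]; exact hp.v_one)
  rw [ContinuousWithinAt, hp.v_one_eq] at hv
  exact hv.comp (tendsto_nhdsWithin_iff.2
    ⟨hF.tendsto_atTop, Eventually.of_forall fun x => (hF.mem_Icc x).2⟩)

end StandardPair

def HasIcoIncrements (u : ℝ → ℝ) (m : Measure ℝ) : Prop :=
  ∀ a b, a ≤ b → u b - u a = m.real (Ico a b)

namespace HasIcoIncrements

variable {u u₀ : ℝ → ℝ} {m μ₀ ν ν₁ ν₂ : Measure ℝ} {C : ℝ}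

lemma monotone (hu : HasIcoIncrements u m) : Monotone u := fun a b hab =>
  sub_nonneg.1 ((hu a b hab).symm ▸ measureReal_nonneg)

lemma of_measure_Ici_ne_top (hm : ∀ x, m (Ici x) ≠ ∞) :
    HasIcoIncrements (fun x => -m.real (Ici x)) m := fun a b hab => by
  dsimp only
  rw [measureReal_Ici_eq_add hab (hm a)]
  ring

lemma measureReal_Ici_eq (hu : HasIcoIncrements u m) (hm : ∀ x, m (Ici x) ≠ ∞) (x : ℝ) :
    m.real (Ici x) = u 0 + m.real (Ici 0) - u x := by
  rcases le_total x 0 with hx | hx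
  · rw [measureReal_Ici_eq_add hx (hm x), ← hu x 0 hx]
    ring
  · rw [measureReal_Ici_eq_add hx (hm 0), ← hu 0 x hx]
    ring

lemma comp_min (hu : HasIcoIncrements u m) (t : ℝ) :
    HasIcoIncrements (fun x => u (min x t)) (m.restrict (Iio t)) := fun a b hab => by
  dsimp only
  rw [measureReal_restrict_apply measurableSet_Ico, Ico_inter_Iio]
  rcases le_or_gt a t with hat | hat
  · rw [min_eq_left hat]
    exact hu a _ (le_min hab hat)
  · rw [min_eq_right hat.le, min_eq_right (hat.le.trans hab), sub_self,
      Ico_eq_empty_of_le hat.le, measureReal_empty]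

lemma abs_sub_le (hu : HasIcoIncrements u m) (hu₀ : IsLSL u₀ μ₀) (hC : 0 ≤ C)
    (hm : m ≤ ENNReal.ofReal C • μ₀) (x y : ℝ) : |u y - u x| ≤ C * |u₀ y - u₀ x| := by
  wlog hxy : x ≤ y generalizing x y
  · rw [abs_sub_comm, abs_sub_comm (u₀ y)]
    exact this y x (le_of_not_ge hxy)
  calc |u y - u x| = m.real (Ico x y) := by
        rw [abs_of_nonneg (sub_nonneg.2 (hu.monotone hxy)), hu x y hxy]
    _ ≤ C * μ₀.real (Ico x y) := by
        rw [measureReal_def, measureReal_def, ← ENNReal.toReal_ofReal hC, ← ENNReal.toReal_mul]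
        exact ENNReal.toReal_mono (ENNReal.mul_ne_top ENNReal.ofReal_ne_top
          (hu₀.measure_Ico_ne_top x y)) (hm _)
    _ ≤ C * |u₀ y - u₀ x| := mul_le_mul_of_nonneg_left
        (ENNReal.toReal_le_of_le_ofReal (abs_nonneg _) (hu₀.measure_Ico_le x y)) hC

lemma integrable [IsFiniteMeasure ν] (hu : HasIcoIncrements u m) (hu₀ : IsLSL u₀ μ₀)
    (hC : 0 ≤ C) (hm : m ≤ ENNReal.ofReal C • μ₀) (hi : Integrable u₀ ν) : Integrable u ν := by
  refine ((integrable_const |u 0|).add ((hi.sub (integrable_const (u₀ 0))).abs.const_mul C)).mono'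
    hu.monotone.measurable.aestronglyMeasurable (Eventually.of_forall fun x => ?_)
  have := hu.abs_sub_le hu₀ hC hm 0 x
  have := abs_sub_abs_le_abs_sub (u x) (u 0)
  simp only [Real.norm_eq_abs, Pi.add_apply, Pi.sub_apply]
  linarith

lemma integrable_measureReal_Ici (hu : HasIcoIncrements u m) (hm : ∀ x, m (Ici x) ≠ ∞)
    [IsFiniteMeasure ν] (hi : Integrable u ν) : Integrable (fun x => m.real (Ici x)) ν :=
  funext (hu.measureReal_Ici_eq hm) ▸ (integrable_const _).sub hi

lemma integral_measureReal_Ici [IsProbabilityMeasure ν] (hu : HasIcoIncrements u m)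
    (hm : ∀ x, m (Ici x) ≠ ∞) (hi : Integrable u ν) :
    ∫ x, m.real (Ici x) ∂ν = u 0 + m.real (Ici 0) - ∫ x, u x ∂ν := by
  rw [funext (hu.measureReal_Ici_eq hm), integral_sub (integrable_const _) hi, integral_const,
    probReal_univ, one_smul]

lemma lintegral_measure_Ici_le_iff [IsProbabilityMeasure ν₁] [IsProbabilityMeasure ν₂]
    (hu : HasIcoIncrements u m) (hm : ∀ x, m (Ici x) ≠ ∞) (h₁ : Integrable u ν₁)
    (h₂ : Integrable u ν₂) :
    ∫⁻ x, m (Ici x) ∂ν₂ ≤ ∫⁻ x, m (Ici x) ∂ν₁ ↔ ∫ x, u x ∂ν₁ ≤ ∫ x, u x ∂ν₂ := by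
  have hlint : ∀ ρ : Measure ℝ, Integrable (fun x => m.real (Ici x)) ρ →
      ∫⁻ x, m (Ici x) ∂ρ = ENNReal.ofReal (∫ x, m.real (Ici x) ∂ρ) := fun ρ hi => by
    rw [ofReal_integral_eq_lintegral_ofReal hi (Eventually.of_forall fun _ => measureReal_nonneg)]
    exact lintegral_congr fun x => (ENNReal.ofReal_toReal (hm x)).symm
  rw [hlint ν₂ (hu.integrable_measureReal_Ici hm h₂),
    hlint ν₁ (hu.integrable_measureReal_Ici hm h₁),
    ENNReal.ofReal_le_ofReal_iff (integral_nonneg fun _ => measureReal_nonneg),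
    hu.integral_measureReal_Ici hm h₁, hu.integral_measureReal_Ici hm h₂]
  constructor <;> intro h <;> linarith

end HasIcoIncrements

section Comparison

variable {u₀ : ℝ → ℝ} {μ₀ m ν₁ ν₂ : Measure ℝ} {C : ℝ}
  [IsProbabilityMeasure ν₁] [IsProbabilityMeasure ν₂]

lemma integral_le_integral_of_forall_restrict_Iio {u : ℝ → ℝ} (hu₀ : IsLSL u₀ μ₀)
    (hi₁ : Integrable u₀ ν₁) (hi₂ : Integrable u₀ ν₂) (hC : 0 ≤ C)
    (hm : m ≤ ENNReal.ofReal C • μ₀) (hu : HasIcoIncrements u m)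
    (h : ∀ t, ∫⁻ x, m.restrict (Iio t) (Ici x) ∂ν₂ ≤ ∫⁻ x, m.restrict (Iio t) (Ici x) ∂ν₁) :
    ∫ x, u x ∂ν₁ ≤ ∫ x, u x ∂ν₂ := by
  have hmt (t : ℝ) : m.restrict (Iio t) ≤ ENNReal.ofReal C • μ₀ := Measure.restrict_le_self.trans hm
  have htail (t x : ℝ) : m.restrict (Iio t) (Ici x) ≠ ∞ := by
    rw [Measure.restrict_apply measurableSet_Ici, Ici_inter_Iio]
    exact hu₀.measure_Ico_ne_top_of_le_smul ENNReal.ofReal_ne_top hm x t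
  refine le_of_tendsto_of_tendsto'
    (hu.monotone.tendsto_integral_comp_min (hu.integrable hu₀ hC hm hi₁)
      fun n => (hu.comp_min n).integrable hu₀ hC (hmt n) hi₁)
    (hu.monotone.tendsto_integral_comp_min (hu.integrable hu₀ hC hm hi₂)
      fun n => (hu.comp_min n).integrable hu₀ hC (hmt n) hi₂) fun n => ?_
  exact ((hu.comp_min n).lintegral_measure_Ici_le_iff (htail n)
    ((hu.comp_min n).integrable hu₀ hC (hmt n) hi₁)
    ((hu.comp_min n).integrable hu₀ hC (hmt n) hi₂)).1 (h n)

lemma lintegral_measure_Ici_le_of_forall_integral_le (hu₀ : IsLSL u₀ μ₀)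
    (hi₁ : Integrable u₀ ν₁) (hi₂ : Integrable u₀ ν₂) (hC : 0 ≤ C)
    (hm : m ≤ ENNReal.ofReal C • μ₀)
    (h : ∀ u, HasIcoIncrements u m → ∫ x, u x ∂ν₁ ≤ ∫ x, u x ∂ν₂) :
    ∫⁻ x, m (Ici x) ∂ν₂ ≤ ∫⁻ x, m (Ici x) ∂ν₁ := by
  have hfin := hu₀.measure_Ico_ne_top_of_le_smul ENNReal.ofReal_ne_top hm
  by_cases h0 : m (Ici 0) = ∞
  -- then every tail is infinite and the right-hand side is `∞`
  · have htop (x : ℝ) : m (Ici x) = ∞ := (measure_Ici_eq_top_iff hfin 0 x).1 h0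
    simp [htop]
  have htail (x : ℝ) : m (Ici x) ≠ ∞ := mt (measure_Ici_eq_top_iff hfin x 0).1 h0
  have hu := HasIcoIncrements.of_measure_Ici_ne_top htail
  exact (hu.lintegral_measure_Ici_le_iff htail (hu.integrable hu₀ hC hm hi₁)
    (hu.integrable hu₀ hC hm hi₂)).2 (h _ hu)

end Comparison

section Density

variable {μ₀ : Measure ℝ} {k : ℝ → ℝ}

lemma hasDensity_iff_hasIcoIncrements {u : ℝ → ℝ} (hk : Measurable k) (hk0 : ∀ x, 0 ≤ k x) :
    HasDensity u k μ₀ ↔ HasIcoIncrements u (μ₀.withDensity fun x => ENNReal.ofReal (k x)) := by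
  have hint (a b : ℝ) :
      ∫ s in Ico a b, k s ∂μ₀ = (μ₀.withDensity fun x => ENNReal.ofReal (k x)).real (Ico a b) := by
    rw [integral_eq_lintegral_of_nonneg_ae (Eventually.of_forall hk0) hk.aestronglyMeasurable,
      measureReal_def, withDensity_apply _ measurableSet_Ico]
  simp only [HasDensity, HasIcoIncrements, hint]

lemma withDensity_ofReal_le_smul {C : ℝ} (hkC : ∀ x, k x ≤ C) :
    μ₀.withDensity (fun x => ENNReal.ofReal (k x)) ≤ ENNReal.ofReal C • μ₀ :=
  withDensity_const (μ := μ₀) (ENNReal.ofReal C) ▸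
    withDensity_mono (Eventually.of_forall fun x => ENNReal.ofReal_le_ofReal (hkC x))

lemma withDensity_ofReal_indicator_Iio (t : ℝ) :
    μ₀.withDensity (fun x => ENNReal.ofReal ((Iio t).indicator k x)) =
      (μ₀.withDensity fun x => ENNReal.ofReal (k x)).restrict (Iio t) := by
  rw [restrict_withDensity measurableSet_Iio, ← withDensity_indicator measurableSet_Iio]
  congr 1
  funext x
  by_cases hx : x ∈ Iio t <;> simp [hx]

end Density

theorem theorem1_i_iff_iii_general
    (u₀ v₀ F₁ F₂ : ℝ → ℝ) (hpair : StandardPair u₀ v₀)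
    (hF₁ : IsCDF F₁) (hF₂ : IsCDF F₂)
    (μ₀ : Measure ℝ) (hμ₀ : IsLSL u₀ μ₀)
    (ν₁ ν₂ : Measure ℝ)
    (hν₁ : IsLSR (fun x => v₀ (F₁ x)) ν₁) (hν₂ : IsLSR (fun x => v₀ (F₂ x)) ν₂)
    (ha₁ : CondA u₀ ν₁) (ha₂ : CondA u₀ ν₂) :
    UpperOrder v₀ F₁ F₂ μ₀ ↔
    (∀ u k : ℝ → ℝ, Antitone k → (∀ x, 0 ≤ k x) → (∃ C, ∀ x, k x ≤ C) →
      HasDensity u k μ₀ →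
      ∫ x, u x ∂ν₁ ≤ ∫ x, u x ∂ν₂) := by
  have := hμ₀.sigmaFinite
  have := hν₁.isProbabilityMeasure (hpair.tendsto_comp_atBot hF₁) (hpair.tendsto_comp_atTop hF₁)
  have := hν₂.isProbabilityMeasure (hpair.tendsto_comp_atBot hF₂) (hpair.tendsto_comp_atTop hF₂)
  have hi₁ := ha₁.integrable hpair.u_mono.measurable.aestronglyMeasurable
  have hi₂ := ha₂.integrable hpair.u_mono.measurable.aestronglyMeasurable
  simp only [UpperOrder,
    hν₁.lintegral_ofReal_eq_lintegral_measure_Ici (hpair.tendsto_comp_atBot hF₁),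
    hν₂.lintegral_ofReal_eq_lintegral_measure_Ici (hpair.tendsto_comp_atBot hF₂)]
  constructor
  · rintro h u k hk hk0 ⟨C, hkC⟩ hu
    have hC : 0 ≤ C := (hk0 0).trans (hkC 0)
    refine integral_le_integral_of_forall_restrict_Iio hμ₀ hi₁ hi₂ hC
      (withDensity_ofReal_le_smul hkC) ((hasDensity_iff_hasIcoIncrements hk.measurable hk0).1 hu)
      fun t => ?_
    rw [← withDensity_ofReal_indicator_Iio]
    exact h _ (hk.indicator_Iio hk0 t) (fun x => indicator_nonneg (fun x _ => hk0 x) x)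
      ⟨C, fun x => indicator_apply_le' (fun _ => hkC x) fun _ => hC⟩
  · rintro h k hk hk0 ⟨C, hkC⟩
    exact lintegral_measure_Ici_le_of_forall_integral_le hμ₀ hi₁ hi₂ ((hk0 0).trans (hkC 0))
      (withDensity_ofReal_le_smul hkC) fun u hu =>
        h u k hk hk0 ⟨C, hkC⟩ ((hasDensity_iff_hasIcoIncrements hk.measurable hk0).2 hu)

/-- **Theorem 1, (i) ↔ (iii).**  Let `(u₀,v₀)` be a standard pair and
`F₁, F₂` cdf's satisfying conditions (a) and (b).  Then `F₁ ≺^{(u₀,v₀)} F₂` iff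
`∫_{-∞}^{∞} u(x) dv₀(F₁(x)) ≤ ∫_{-∞}^{∞} u(x) dv₀(F₂(x))` for all `u ∈ U⁰`, i.e. all
non-decreasing `u₀`-concave `u` (having a bounded non-negative non-increasing density
`k` with respect to `du₀`). -/
theorem theorem1_i_iff_iii
    (u₀ v₀ F₁ F₂ : ℝ → ℝ) (hpair : StandardPair u₀ v₀)
    (hF₁ : IsCDF F₁) (hF₂ : IsCDF F₂)
    (μ₀ : Measure ℝ) (hμ₀ : IsLSL u₀ μ₀)
    (ν₁ ν₂ : Measure ℝ)
    (hν₁ : IsLSR (fun x => v₀ (F₁ x)) ν₁) (hν₂ : IsLSR (fun x => v₀ (F₂ x)) ν₂)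
    (ha₁ : CondA u₀ ν₁) (ha₂ : CondA u₀ ν₂)
    (lam₁ lam₂ : Measure ℝ)
    (hlam₁ : IsLSL01 (fun α => u₀ (qf F₁ α)) lam₁)
    (hlam₂ : IsLSL01 (fun α => u₀ (qf F₂ α)) lam₂)
    (hb₁ : CondB v₀ lam₁) (hb₂ : CondB v₀ lam₂) :
    UpperOrder v₀ F₁ F₂ μ₀ ↔
    (∀ u k : ℝ → ℝ, Antitone k → (∀ x, 0 ≤ k x) → (∃ C, ∀ x, k x ≤ C) →
      HasDensity u k μ₀ →
      ∫ x, u x ∂ν₁ ≤ ∫ x, u x ∂ν₂) :=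
  theorem1_i_iff_iii_general u₀ v₀ F₁ F₂ hpair hF₁ hF₂ μ₀ hμ₀ ν₁ ν₂ hν₁ hν₂ ha₁ ha₂

end
end
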